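/- If a pair (G*, P) satisfies the restricted faithfulness assumption (adjacency-faithfulness plus orientation-faithfulness) and is Markov, then (G*, P) satisfies the sparsest Markov representation assumption: any DAG Markov with respect to P that is not Markov-equivalent to G* has strictly more edges than G*. -/

import Mathlib

open scoped Classical

/-- A directed acyclic graph on `Fin p`: a finite edge set together with a
topological ordering witnessing acyclicity. -/
structure DAG (p : ℕ) where
  edges : Finset (Fin p × Fin p)
  acyclic : ∃ σ : Equiv.Perm (Fin p), ∀ e ∈ edges, σ.symm e.1 < σ.symm e.2

namespace DAG

variable {p : ℕ}

def edgeRel (G : DAG p) (a b : Fin p) : Prop := (a, b) ∈ G.edges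

/-- adjacency in the skeleton -/
def adj (G : DAG p) (a b : Fin p) : Prop := (a, b) ∈ G.edges ∨ (b, a) ∈ G.edges

/-- the skeleton as a finite set of unordered pairs -/
def skeleton (G : DAG p) : Finset (Sym2 (Fin p)) := G.edges.image (fun e => s(e.1, e.2))

/-- `b` is a collider on a path segment `a - b - c`. -/
def isCollider (G : DAG p) (a b c : Fin p) : Prop := (a, b) ∈ G.edges ∧ (c, b) ∈ G.edges

/-- `b` is in `S` or an ancestor of some element of `S`. -/
def ancestorOfSet (G : DAG p) (b : Fin p) (S : Finset (Fin p)) : Prop :=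
  ∃ s ∈ S, Relation.ReflTransGen G.edgeRel b s

/-- a (simple, undirected) path from `i` to `j` in the skeleton, as a list of vertices -/
def IsTrail (G : DAG p) (i j : Fin p) (l : List (Fin p)) : Prop :=
  l.Chain' G.adj ∧ l.Nodup ∧ 2 ≤ l.length ∧ l.head? = some i ∧ l.getLast? = some j

/-- the path `l` d-connects its endpoints given `S`: every collider on it is in `S` or
has a descendant in `S`, and every non-collider on it is not in `S`. -/
def dConnectsPath (G : DAG p) (S : Finset (Fin p)) (l : List (Fin p)) : Prop :=
  ∀ a b c : Fin p, [a, b, c] <:+: l →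
    (G.isCollider a b c → G.ancestorOfSet b S) ∧ (¬ G.isCollider a b c → b ∉ S)

def dConnected (G : DAG p) (i j : Fin p) (S : Finset (Fin p)) : Prop :=
  ∃ l : List (Fin p), G.IsTrail i j l ∧ G.dConnectsPath S l

def dSep (G : DAG p) (i j : Fin p) (S : Finset (Fin p)) : Prop :=
  i ≠ j ∧ ¬ G.dConnected i j S

end DAG

/-- A (pairwise) conditional independence model: `CI i j S` means
`X_i ⫫ X_j | X_S`. -/
abbrev CIModel (p : ℕ) := Fin p → Fin p → Finset (Fin p) → Prop

variable {p : ℕ}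

/-- `G` is Markov w.r.t. the CI model: every d-separation is a CI statement. -/
def Markov (G : DAG p) (CI : CIModel p) : Prop :=
  ∀ i j S, G.dSep i j S → CI i j S

/-- Markov equivalence: same d-separation statements. -/
def MarkovEquiv (G G' : DAG p) : Prop :=
  ∀ i j S, G.dSep i j S ↔ G'.dSep i j S

/-- `π` is a topological ordering of `G`. -/
def IsTopOrder (G : DAG p) (π : Equiv.Perm (Fin p)) : Prop :=
  ∀ e ∈ G.edges, π.symm e.1 < π.symm e.2

/-- the predecessors `{π 0, …, π (k-1)}` of position `k` in the ordering `π` -/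
def predSet (π : Equiv.Perm (Fin p)) (k : Fin p) : Finset (Fin p) :=
  (Finset.univ.filter (fun m => m < k)).image π

/-- The minimal I-map `G_π`: for `j < k` there is an edge `π j → π k` iff
`π j` and `π k` are conditionally dependent given all other predecessors of `π k`. -/
noncomputable def minimalIMap (CI : CIModel p) (π : Equiv.Perm (Fin p)) : DAG p where
  edges := Finset.univ.filter (fun q : Fin p × Fin p =>
    ∃ j k : Fin p, j < k ∧ q = (π j, π k) ∧ ¬ CI (π j) (π k) ((predSet π k).erase (π j)))
  acyclic := ⟨π, by
    intro e he
    rw [Finset.mem_filter] at he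
    obtain ⟨-, j, k, hjk, rfl, -⟩ := he
    simpa using hjk⟩

/-- the minimal number of edges of a minimal I-map `G_π` over all permutations `π` -/
noncomputable def spScore (CI : CIModel p) : ℕ :=
  ((Finset.univ : Finset (Equiv.Perm (Fin p))).image
    (fun π => (minimalIMap CI π).edges.card)).min' (Finset.univ_nonempty.image _)

/-- adjacency-faithfulness: endpoints of edges of `G` are conditionally dependent
given any conditioning set. -/
def AdjFaithful (G : DAG p) (CI : CIModel p) : Prop :=
  ∀ e ∈ G.edges, ∀ S : Finset (Fin p), e.1 ∉ S → e.2 ∉ S →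
    ¬ CI e.1 e.2 S ∧ ¬ CI e.2 e.1 S

/-- the sparsest Markov representation assumption -/
def SMR (G : DAG p) (CI : CIModel p) : Prop :=
  Markov G CI ∧
    ∀ G' : DAG p, Markov G' CI → ¬ MarkovEquiv G' G → G.edges.card < G'.edges.card

/-- the set of d-separation statements of `G` -/
def DsepSet (G : DAG p) : Set (Fin p × Fin p × Finset (Fin p)) :=
  {t | G.dSep t.1 t.2.1 t.2.2}

/-- P-minimality: no Markov DAG entails strictly more d-separations. -/
def PMinimal (G : DAG p) (CI : CIModel p) : Prop :=
  ∀ G' : DAG p, Markov G' CI → ¬ (DsepSet G ⊂ DsepSet G')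


/-- orientation-faithfulness: for every unshielded triple `(j, ℓ, k)` and every `S`
such that `j` and `k` are d-connected given `S`, `X_j` and `X_k` are conditionally
dependent given `X_S`. -/
def OrientFaithful (G : DAG p) (CI : CIModel p) : Prop :=
  ∀ j ℓ k : Fin p, G.adj j ℓ → G.adj ℓ k → ¬ G.adj j k → j ≠ k →
    ∀ S : Finset (Fin p), G.dConnected j k S → ¬ CI j k S ∧ ¬ CI k j S


/-!
Adjacency-faithfulness, together with the fact that in `G'` a vertex is d-separated from a
non-adjacent non-descendant by its parents, puts every edge of `G` into the skeleton of `G'`;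
if `G'` has no more edges, the two skeletons coincide. Orientation-faithfulness then transfers
the separating set of an unshielded triple `a - b - c` from `G'` to `G`; a triple blocked in both
graphs by the same set has `b` as a collider in either graph exactly when `b` is outside the set,
so `G` and `G'` have the same v-structures. By the Verma–Pearl theorem they are then Markov
equivalent. To prove it, an active walk of `G` is made active in `G'` by removing loops,
shielded colliders and colliders created in `G'`, and by moving every collider whose shortest
route into the conditioning set starts with an edge reversed in `G'` one step along that route;
each move shortens the walk, or keeps its length and brings it closer to the set.
-/

theorem List.isChain_iff_getElem? {α : Type*} {R : α → α → Prop} {l : List α} :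
    l.IsChain R ↔ ∀ n a b, l[n]? = some a → l[n + 1]? = some b → R a b := by
  rw [List.isChain_iff_getElem]
  constructor
  · intro h n a b ha hb
    obtain ⟨hn, rfl⟩ := List.getElem?_eq_some_iff.1 ha
    obtain ⟨hn1, rfl⟩ := List.getElem?_eq_some_iff.1 hb
    exact h n hn1
  · intro h n hn
    exact h n _ _ (List.getElem?_eq_getElem _) (List.getElem?_eq_getElem _)

theorem List.triple_infix_iff_getElem? {α : Type*} {l : List α} {a b c : α} :
    [a, b, c] <:+: l ↔ ∃ n, l[n]? = some a ∧ l[n + 1]? = some b ∧ l[n + 2]? = some c := by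
  rw [List.infix_iff_getElem?]
  constructor
  · rintro ⟨n, -, h⟩
    refine ⟨n, ?_, ?_, ?_⟩
    · simpa using h 0 (by simp)
    · simpa [Nat.add_comm] using h 1 (by simp)
    · simpa [Nat.add_comm] using h 2 (by simp)
  · rintro ⟨n, ha, hb, hc⟩
    refine ⟨n, ?_, fun i hi => ?_⟩
    · have := (List.getElem?_eq_some_iff.1 hc).1
      simp only [List.length_cons, List.length_nil]
      omega
    · simp only [List.length_cons, List.length_nil] at hi
      interval_cases i <;> simpa [Nat.add_comm]

theorem List.exists_getElem?_eq_some {α : Type*} {l : List α} {n : ℕ} (hn : n < l.length) :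
    ∃ a, l[n]? = some a :=
  ⟨l[n], List.getElem?_eq_getElem hn⟩

theorem List.Nodup.ne_of_getElem? {α : Type*} {l : List α} (hnd : l.Nodup) {n m : ℕ} {a b : α}
    (ha : l[n]? = some a) (hb : l[m]? = some b) (hnm : n ≠ m) : a ≠ b := by
  rintro rfl
  have hn := _root_.of_getElem?_eq_some ha
  exact hnm ((List.getElem?_inj hn hnd).1 (ha.trans hb.symm))

namespace DAG

open Relation

section Basic

variable (G : DAG p)

theorem not_transGen_self (a : Fin p) : ¬ TransGen G.edgeRel a a := by
  obtain ⟨σ, hσ⟩ := G.acyclic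
  suffices ∀ {a b}, TransGen G.edgeRel a b → σ.symm a < σ.symm b from
    fun h => lt_irrefl _ (this h)
  intro a b h
  induction h with
  | single h => exact hσ _ h
  | tail _ hbc ih => exact ih.trans (hσ _ hbc)

variable {G}

theorem not_mem_edges_self (a : Fin p) : (a, a) ∉ G.edges :=
  fun h => G.not_transGen_self a (.single h)

theorem not_mem_edges_swap {a b : Fin p} (h : (a, b) ∈ G.edges) : (b, a) ∉ G.edges :=
  fun h' => G.not_transGen_self a ((TransGen.single h).tail h')

theorem not_mem_edges_of_path {a b c : Fin p} (hab : (a, b) ∈ G.edges)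
    (hbc : (b, c) ∈ G.edges) : (c, a) ∉ G.edges :=
  fun hca => G.not_transGen_self a (((TransGen.single hab).tail hbc).tail hca)

theorem adj.ne {a b : Fin p} (h : G.adj a b) : a ≠ b := by
  rintro rfl
  exact h.elim (not_mem_edges_self a) (not_mem_edges_self a)

theorem adj_comm {a b : Fin p} : G.adj a b ↔ G.adj b a := or_comm

theorem mem_edges_of_adj_of_path {a b c : Fin p} (hab : (a, b) ∈ G.edges)
    (hbc : (b, c) ∈ G.edges) (hac : G.adj a c) : (a, c) ∈ G.edges :=
  hac.resolve_right (not_mem_edges_of_path hab hbc)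

theorem isCollider_comm {a b c : Fin p} : G.isCollider a b c ↔ G.isCollider c b a := and_comm

theorem not_isCollider_of_mem_edges_left {a b c : Fin p} (hba : (b, a) ∈ G.edges) :
    ¬ G.isCollider a b c :=
  fun h => not_mem_edges_swap hba h.1

theorem not_isCollider_of_mem_edges_right {a b c : Fin p} (hbc : (b, c) ∈ G.edges) :
    ¬ G.isCollider a b c :=
  fun h => not_mem_edges_swap hbc h.2

theorem ancestorOfSet_of_mem {b : Fin p} {S : Finset (Fin p)} (h : b ∈ S) :
    G.ancestorOfSet b S :=
  ⟨b, h, .refl⟩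

theorem ancestorOfSet.of_edge {a b : Fin p} {S : Finset (Fin p)} (h : (a, b) ∈ G.edges)
    (hb : G.ancestorOfSet b S) : G.ancestorOfSet a S :=
  let ⟨s, hs, hbs⟩ := hb
  ⟨s, hs, .head h hbs⟩

theorem mem_skeleton_iff {a b : Fin p} : s(a, b) ∈ G.skeleton ↔ G.adj a b := by
  simp only [skeleton, Finset.mem_image, Sym2.eq_iff, Prod.exists, adj]
  constructor
  · rintro ⟨x, y, h, ⟨rfl, rfl⟩ | ⟨rfl, rfl⟩⟩
    exacts [.inl h, .inr h]
  · rintro (h | h)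
    exacts [⟨a, b, h, .inl ⟨rfl, rfl⟩⟩, ⟨b, a, h, .inr ⟨rfl, rfl⟩⟩]

theorem card_skeleton : G.skeleton.card = G.edges.card := by
  refine Finset.card_image_of_injOn ?_
  rintro ⟨a, b⟩ hab ⟨c, d⟩ hcd h
  obtain ⟨rfl, rfl⟩ | ⟨rfl, rfl⟩ := Sym2.eq_iff.1 h
  · rfl
  · exact absurd hcd (not_mem_edges_swap hab)

end Basic

variable {G G' : DAG p} {S : Finset (Fin p)} {i j : Fin p} {l : List (Fin p)}

variable (G S) in
def ReachesIn : ℕ → Fin p → Prop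
  | 0, v => v ∈ S
  | n + 1, v => ∃ d, (v, d) ∈ G.edges ∧ ReachesIn n d

variable (G S) in
noncomputable def distToSet (v : Fin p) : ℕ := sInf {n | G.ReachesIn S n v}

theorem ancestorOfSet_iff_exists_reachesIn {v : Fin p} :
    G.ancestorOfSet v S ↔ ∃ n, G.ReachesIn S n v := by
  constructor
  · rintro ⟨s, hs, hvs⟩
    induction hvs using ReflTransGen.head_induction_on with
    | refl => exact ⟨0, hs⟩
    | head hvd _ ih =>
      obtain ⟨n, hn⟩ := ih
      exact ⟨n + 1, _, hvd, hn⟩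
  · rintro ⟨n, hn⟩
    induction n generalizing v with
    | zero => exact ancestorOfSet_of_mem hn
    | succ n ih =>
      obtain ⟨d, hvd, hd⟩ := hn
      exact (ih hd).of_edge hvd

theorem reachesIn_distToSet {v : Fin p} (h : G.ancestorOfSet v S) :
    G.ReachesIn S (G.distToSet S v) v :=
  Nat.sInf_mem (ancestorOfSet_iff_exists_reachesIn.1 h)

theorem distToSet_le {v : Fin p} {n : ℕ} (h : G.ReachesIn S n v) : G.distToSet S v ≤ n :=
  Nat.sInf_le h

theorem distToSet_le_succ {v d : Fin p} (hvd : (v, d) ∈ G.edges) (hd : G.ancestorOfSet d S) :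
    G.distToSet S v ≤ G.distToSet S d + 1 :=
  distToSet_le ⟨d, hvd, reachesIn_distToSet hd⟩

def IsFirstStep (G : DAG p) (S : Finset (Fin p)) (b d : Fin p) : Prop :=
  (b, d) ∈ G.edges ∧ G.ancestorOfSet d S ∧ G.distToSet S d + 1 = G.distToSet S b

theorem exists_isFirstStep {b : Fin p} (hb : G.ancestorOfSet b S) (hbS : b ∉ S) :
    ∃ d, G.IsFirstStep S b d := by
  have hreach := reachesIn_distToSet hb
  cases hn : G.distToSet S b with
  | zero => rw [hn] at hreach; exact absurd hreach hbS
  | succ n => ?_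
  rw [hn] at hreach
  obtain ⟨d, hbd, hd⟩ := hreach
  have hdAn := ancestorOfSet_iff_exists_reachesIn.2 ⟨n, hd⟩
  have := distToSet_le_succ hbd hdAn
  exact ⟨d, hbd, hdAn, by have := distToSet_le hd; omega⟩

def ActiveTriple (G : DAG p) (S : Finset (Fin p)) (a b c : Fin p) : Prop :=
  (G.isCollider a b c → G.ancestorOfSet b S) ∧ (¬ G.isCollider a b c → b ∉ S)

theorem ActiveTriple.symm {a b c : Fin p} (h : G.ActiveTriple S a b c) : G.ActiveTriple S c b a :=
  ⟨fun hcol => h.1 (isCollider_comm.1 hcol), fun hcol => h.2 (mt isCollider_comm.1 hcol)⟩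

structure ActiveWalk (G : DAG p) (S : Finset (Fin p)) (i j : Fin p) (l : List (Fin p)) :
    Prop where
  adj : ∀ {n a b}, l[n]? = some a → l[n + 1]? = some b → G.adj a b
  two_le_length : 2 ≤ l.length
  head : l[0]? = some i
  last : l[l.length - 1]? = some j
  activeTriple : ∀ {n a b c}, l[n]? = some a → l[n + 1]? = some b → l[n + 2]? = some c →
    G.ActiveTriple S a b c

theorem dConnected_iff_exists_activeWalk :
    G.dConnected i j S ↔ ∃ l, l.Nodup ∧ G.ActiveWalk S i j l := by
  constructor
  · rintro ⟨l, ⟨hchain, hnd, hlen, hi, hj⟩, hact⟩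
    refine ⟨l, hnd, fun ha hb => List.isChain_iff_getElem?.1 hchain _ _ _ ha hb, hlen,
      List.head?_eq_getElem?.symm.trans hi, List.getLast?_eq_getElem?.symm.trans hj,
      fun ha hb hc => hact _ _ _ (List.triple_infix_iff_getElem?.2 ⟨_, ha, hb, hc⟩)⟩
  · rintro ⟨l, hnd, h⟩
    refine ⟨l, ⟨List.isChain_iff_getElem?.2 fun _ _ _ => h.adj, hnd, h.two_le_length,
      List.head?_eq_getElem?.trans h.head, List.getLast?_eq_getElem?.trans h.last⟩,
      fun a b c habc => ?_⟩
    obtain ⟨n, ha, hb, hc⟩ := List.triple_infix_iff_getElem?.1 habc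
    exact h.activeTriple ha hb hc

theorem dConnected.symm (h : G.dConnected i j S) : G.dConnected j i S := by
  obtain ⟨l, ⟨hchain, hnd, hlen, hi, hj⟩, hact⟩ := h
  refine ⟨l.reverse, ⟨List.isChain_reverse.2 (List.IsChain.imp (fun _ _ => adj_comm.1) hchain),
    List.nodup_reverse.2 hnd, by simpa using hlen, by simpa using hj, by simpa using hi⟩,
    fun a b c habc => ?_⟩
  exact ActiveTriple.symm (hact c b a (List.reverse_infix.1 (by simpa using habc)))

theorem dSep.symm (h : G.dSep i j S) : G.dSep j i S :=
  ⟨h.1.symm, fun hc => h.2 hc.symm⟩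

theorem not_activeTriple_of_dSep {a b c : Fin p} (h : G.dSep a c S) (hab : G.adj a b)
    (hbc : G.adj b c) : ¬ G.ActiveTriple S a b c := by
  intro hact
  refine h.2 (dConnected_iff_exists_activeWalk.2 ⟨[a, b, c], ?_, ?_⟩)
  · simp [hab.ne, hbc.ne, h.1]
  refine ⟨fun {n x y} hx hy => ?_, by simp, rfl, rfl, fun {n x y z} hx hy hz => ?_⟩
  · rcases n with _ | _ | n <;> simp at hx hy <;> subst hx hy <;> assumption
  · rcases n with _ | n <;> simp at hx hy hz
    subst hx hy hz
    exact hact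

theorem activeTriple_of_not_isCollider {a b c : Fin p} (hncol : ¬ G.isCollider a b c)
    (hb : b ∉ S) : G.ActiveTriple S a b c :=
  ⟨fun hcol => (hncol hcol).elim, fun _ => hb⟩

namespace ActiveWalk

theorem drop (h : G.ActiveWalk S i j l) {k : ℕ} {v : Fin p} (hk : k + 2 ≤ l.length)
    (hv : l[k]? = some v) : G.ActiveWalk S v j (l.drop k) where
  adj ha hb := h.adj (by simpa using ha) (by simpa [Nat.add_assoc] using hb)
  two_le_length := by simp; omega
  head := by simpa using hv
  last := by simpa [show k + (l.length - k - 1) = l.length - 1 by omega] using h.last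
  activeTriple ha hb hc := h.activeTriple (by simpa using ha)
    (by simpa [Nat.add_assoc] using hb) (by simpa [Nat.add_assoc] using hc)

theorem take (h : G.ActiveWalk S i j l) {k : ℕ} {v : Fin p} (hk : 1 ≤ k)
    (hv : l[k]? = some v) : G.ActiveWalk S i v (l.take (k + 1)) := by
  have hlen : (l.take (k + 1)).length = k + 1 := by simp [of_getElem?_eq_some hv]
  have of_take : ∀ {n : ℕ} {a : Fin p}, (l.take (k + 1))[n]? = some a → l[n]? = some a := by
    intro n a
    rw [List.getElem?_take]
    split <;> simp_all
  exact
    { adj := fun ha hb => h.adj (of_take ha) (of_take hb)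
      two_le_length := by omega
      head := by simpa using h.head
      last := by rw [hlen, Nat.add_sub_cancel, List.getElem?_take, if_pos (by omega)]; exact hv
      activeTriple := fun ha hb hc => h.activeTriple (of_take ha) (of_take hb) (of_take hc) }

theorem graft (h : G.ActiveWalk S i j l) {m v : ℕ} {a b : Fin p} (hmv : m < v)
    (ha : l[m]? = some a) (hb : l[v]? = some b) (hab : G.adj a b)
    (hleft : ∀ k x, k + 1 = m → l[k]? = some x → G.ActiveTriple S x a b)
    (hright : ∀ y, l[v + 1]? = some y → G.ActiveTriple S a b y) :
    G.ActiveWalk S i j (l.take (m + 1) ++ l.drop v) := by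
  have hvl := of_getElem?_eq_some hb
  have hget : ∀ n, (l.take (m + 1) ++ l.drop v)[n]? =
      if n ≤ m then l[n]? else l[n - (m + 1) + v]? := by
    intro n
    rw [List.getElem?_append, List.length_take, min_eq_left (by omega), List.getElem?_take,
      List.getElem?_drop]
    by_cases hn : n < m + 1
    · simp [hn, show n ≤ m by omega]
    · simp [hn, show ¬ n ≤ m by omega, Nat.add_comm]
  have hlen : (l.take (m + 1) ++ l.drop v).length = l.length - v + (m + 1) := by
    simp only [List.length_append, List.length_take, List.length_drop]
    omega
  refine ⟨fun {n x y} hx hy => ?_, by omega, by simpa [hget] using h.head, ?_,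
    fun {n x y z} hx hy hz => ?_⟩
  · rw [hget] at hx hy
    split_ifs at hx hy
    · exact h.adj hx hy
    · obtain rfl : m = n := by omega
      rw [ha] at hx; cases hx
      rw [show m + 1 - (m + 1) + v = v by omega, hb] at hy; cases hy
      exact hab
    · omega
    · exact h.adj hx (by rwa [show n + 1 - (m + 1) + v = n - (m + 1) + v + 1 by omega] at hy)
  · rw [hlen, hget, if_neg (by omega),
      show l.length - v + (m + 1) - 1 - (m + 1) + v = l.length - 1 by omega]
    exact h.last
  · rw [hget] at hx hy hz
    split_ifs at hx hy hz
    · exact h.activeTriple hx hy hz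
    · obtain rfl : n + 1 = m := by omega
      rw [ha] at hy; cases hy
      rw [show n + 2 - (n + 1 + 1) + v = v by omega, hb] at hz; cases hz
      exact hleft n x rfl hx
    · omega
    · obtain rfl : n = m := by omega
      rw [ha] at hx; cases hx
      rw [show n + 1 - (n + 1) + v = v by omega, hb] at hy; cases hy
      exact hright z (by rwa [show n + 2 - (n + 1) + v = v + 1 by omega] at hz)
    all_goals first
      | omega
      | exact h.activeTriple hx
          (by rwa [show n + 1 - (m + 1) + v = n - (m + 1) + v + 1 by omega] at hy)
          (by rwa [show n + 2 - (m + 1) + v = n - (m + 1) + v + 2 by omega] at hz)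

theorem eraseIdx (h : G.ActiveWalk S i j l) {n : ℕ} {a c : Fin p} (ha : l[n]? = some a)
    (hc : l[n + 2]? = some c) (hac : G.adj a c)
    (hleft : ∀ k x, k + 1 = n → l[k]? = some x → G.ActiveTriple S x a c)
    (hright : ∀ y, l[n + 3]? = some y → G.ActiveTriple S a c y) :
    G.ActiveWalk S i j (l.eraseIdx (n + 1)) := by
  rw [List.eraseIdx_eq_take_drop_succ]
  exact h.graft (by omega) ha hc hac hleft hright

theorem set (h : G.ActiveWalk S i j l) {k : ℕ} {a d c : Fin p} (ha : l[k]? = some a)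
    (hc : l[k + 2]? = some c) (had : G.adj a d) (hdc : G.adj d c)
    (hleft : ∀ m x, m + 1 = k → l[m]? = some x → G.ActiveTriple S x a d)
    (hmid : G.ActiveTriple S a d c)
    (hright : ∀ y, l[k + 3]? = some y → G.ActiveTriple S d c y) :
    G.ActiveWalk S i j (l.set (k + 1) d) := by
  have hget : ∀ n, (l.set (k + 1) d)[n]? = if n = k + 1 then some d else l[n]? := by
    intro n
    rw [List.getElem?_set]
    by_cases hn : n = k + 1
    · simp [hn, (of_getElem?_eq_some hc).trans' (by omega : k + 1 < k + 2)]
    · simp [hn, Ne.symm hn]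
  refine ⟨fun {n x y} hx hy => ?_, by simpa using h.two_le_length,
    by rw [hget, if_neg (by omega)]; exact h.head,
    by rw [List.length_set, hget, if_neg (by have := of_getElem?_eq_some hc; omega)]; exact h.last,
    fun {n x y z} hx hy hz => ?_⟩
  · rw [hget] at hx hy
    split_ifs at hx hy with h1 h2 h2
    · omega
    · cases hx
      rw [h1, hc] at hy; cases hy
      exact hdc
    · cases hy
      rw [show n = k by omega, ha] at hx; cases hx
      exact had
    · exact h.adj hx hy
  · rw [hget] at hx hy hz
    split_ifs at hx hy hz with h1 h2 h3 h3 h2 h3 h3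
    all_goals first
      | omega
      | (cases hx; rw [h1, hc] at hy; cases hy
         exact hright z (by rwa [show n + 2 = k + 3 by omega] at hz))
      | (cases hy; rw [show n = k by omega, ha] at hx; cases hx
         rw [show n + 2 = k + 2 by omega, hc] at hz; cases hz
         exact hmid)
      | (cases hz; rw [show n + 1 = k by omega, ha] at hy; cases hy
         exact hleft n x (by omega) hx)
      | exact h.activeTriple hx hy hz

/-- Either the walk is directed from `a` up to `z`, or its first collider after `a` puts `a`
into `An(S)`. -/
theorem ancestorOfSet_or_transGen (h : G.ActiveWalk S i j l) {k e : ℕ} {a b z : Fin p}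
    (ha : l[k]? = some a) (hb : l[k + 1]? = some b) (hab : (a, b) ∈ G.edges)
    (hz : l[e]? = some z) (hke : k < e) :
    G.ancestorOfSet a S ∨ TransGen G.edgeRel a z := by
  obtain ⟨d, rfl⟩ : ∃ d, e = k + 1 + d := ⟨e - (k + 1), by omega⟩
  induction d generalizing k a b with
  | zero =>
    rw [Nat.add_zero, hb] at hz; cases hz
    exact .inr (.single hab)
  | succ d ih =>
    obtain ⟨c, hc⟩ := List.exists_getElem?_eq_some
      (show k + 2 < l.length by have := of_getElem?_eq_some hz; omega)
    by_cases hbc : (b, c) ∈ G.edges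
    · rcases ih hb hc hbc (by rwa [show k + 1 + 1 + d = k + 1 + (d + 1) by omega]) (by omega)
        with hAn | hpath
      · exact .inl (hAn.of_edge hab)
      · exact .inr (.head hab hpath)
    · have hcb : (c, b) ∈ G.edges := (h.adj hb hc).resolve_left hbc
      exact .inl (((h.activeTriple ha hb hc).1 ⟨hab, hcb⟩).of_edge hab)

theorem reverse (h : G.ActiveWalk S i j l) : G.ActiveWalk S j i l.reverse := by
  have rev : ∀ {n : ℕ} {x : Fin p}, l.reverse[n]? = some x → l[l.length - 1 - n]? = some x :=
    fun {n x} hx => by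
      have := of_getElem?_eq_some hx
      rwa [List.getElem?_reverse' (j := l.length - 1 - n) (by simp at this ⊢; omega)] at hx
  refine ⟨fun {n x y} hx hy => ?_, by simpa using h.two_le_length, ?_, ?_,
    fun {n x y z} hx hy hz => ?_⟩
  · have := of_getElem?_eq_some hy
    simp only [List.length_reverse] at this
    have hx' : l[l.length - 1 - (n + 1) + 1]? = some x := by
      rw [show l.length - 1 - (n + 1) + 1 = l.length - 1 - n by omega]; exact rev hx
    exact adj_comm.1 (h.adj (rev hy) hx')
  · rw [List.getElem?_reverse' (j := l.length - 1) (by simp; have := h.two_le_length; omega)]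
    exact h.last
  · rw [List.getElem?_reverse' (j := 0) (by simp; have := h.two_le_length; omega)]
    exact h.head
  · have := of_getElem?_eq_some hz
    simp only [List.length_reverse] at this
    refine (h.activeTriple (rev hz) ?_ ?_).symm
    · rw [show l.length - 1 - (n + 2) + 1 = l.length - 1 - (n + 1) by omega]; exact rev hy
    · rw [show l.length - 1 - (n + 2) + 2 = l.length - 1 - n by omega]; exact rev hx

/-- A vertex met twice is active as the junction of the shortcut across the loop: if it were a
blocked collider there, then both visits would pass through it as non-colliders, and the loop
would be a directed cycle unless it reaches a collider in `An(S)`. -/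
theorem activeTriple_of_loop (h : G.ActiveWalk S i j l) {k m : ℕ} {x v b : Fin p}
    (hkm : k < m) (hx : l[k]? = some x) (hv₁ : l[k + 1]? = some v) (hv₂ : l[m + 1]? = some v)
    (hb : l[m + 2]? = some b) : G.ActiveTriple S x v b := by
  have hlen := of_getElem?_eq_some hv₂
  obtain ⟨w₁, hw₁⟩ := List.exists_getElem?_eq_some (show k + 2 < l.length by omega)
  obtain ⟨w₂, hw₂⟩ := List.exists_getElem?_eq_some (show m < l.length by omega)
  have first := h.activeTriple hx hv₁ hw₁
  have second := h.activeTriple hw₂ hv₂ hb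
  constructor
  · rintro ⟨hxv, hbv⟩
    by_cases hw₁v : (w₁, v) ∈ G.edges
    · exact first.1 ⟨hxv, hw₁v⟩
    by_cases hw₂v : (w₂, v) ∈ G.edges
    · exact second.1 ⟨hw₂v, hbv⟩
    have hvw₁ : (v, w₁) ∈ G.edges := (h.adj hv₁ hw₁).resolve_right hw₁v
    refine (h.ancestorOfSet_or_transGen hv₁ hw₁ hvw₁ hv₂ (by omega)).resolve_right ?_
    exact G.not_transGen_self v
  · intro hncol
    by_cases hxv : (x, v) ∈ G.edges
    · exact second.2 fun hcol => hncol ⟨hxv, hcol.2⟩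
    · exact first.2 fun hcol => hxv hcol.1

theorem exists_shorter_of_not_nodup (h : G.ActiveWalk S i j l) (hij : i ≠ j)
    (hnd : ¬ l.Nodup) : ∃ l', G.ActiveWalk S i j l' ∧ l'.length < l.length := by
  simp only [List.nodup_iff_getElem?_ne_getElem?, not_forall, not_not] at hnd
  obtain ⟨k₁, k₂, hk, hk₂, heq⟩ := hnd
  obtain ⟨v, hv₁⟩ := List.exists_getElem?_eq_some (l := l) (n := k₁) (by omega)
  have hv₂ : l[k₂]? = some v := heq ▸ hv₁
  have hlast := h.last
  obtain rfl | hk₁ := Nat.eq_zero_or_pos k₁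
  · rw [h.head] at hv₁; cases hv₁
    have hk₂' : k₂ + 2 ≤ l.length := by
      by_contra hk₂'
      rw [show k₂ = l.length - 1 by omega, hlast] at hv₂
      exact hij (Option.some_injective _ hv₂).symm
    exact ⟨_, h.drop hk₂' hv₂, by simp; omega⟩
  by_cases hk₂' : k₂ = l.length - 1
  · rw [hk₂', hlast] at hv₂; cases hv₂
    exact ⟨_, h.take hk₁ hv₁, by simp; omega⟩
  obtain ⟨b, hb⟩ := List.exists_getElem?_eq_some (l := l) (n := k₂ + 1) (by omega)
  refine ⟨_, h.graft (m := k₁) (v := k₂ + 1) (by omega) hv₁ hb (h.adj hv₂ hb) ?_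
    fun y hy => h.activeTriple hv₂ hb hy, by simp; omega⟩
  rintro k x rfl hx
  obtain ⟨m, rfl⟩ : ∃ m, k₂ = m + 1 := ⟨k₂ - 1, by omega⟩
  exact h.activeTriple_of_loop (by omega) hx hv₁ hv₂ hb

theorem exists_shorter_of_shielded_collider (h : G.ActiveWalk S i j l) {n : ℕ} {a b c : Fin p}
    (ha : l[n]? = some a) (hb : l[n + 1]? = some b) (hc : l[n + 2]? = some c)
    (hcol : G.isCollider a b c) (hac : G.adj a c) :
    ∃ l', G.ActiveWalk S i j l' ∧ l'.length < l.length := by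
  have hbAn := (h.activeTriple ha hb hc).1 hcol
  have := of_getElem?_eq_some hc
  refine ⟨_, h.eraseIdx ha hc hac ?_ ?_, by rw [List.length_eraseIdx_of_lt (by omega)]; omega⟩
  · rintro k x rfl hx
    exact ⟨fun _ => hbAn.of_edge hcol.1,
      fun _ => (h.activeTriple hx ha hb).2 (not_isCollider_of_mem_edges_right hcol.1)⟩
  · intro y hy
    exact ⟨fun _ => hbAn.of_edge hcol.2,
      fun _ => (h.activeTriple hb hc hy).2 (not_isCollider_of_mem_edges_left hcol.2)⟩

end ActiveWalk

variable (G) in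
def parents (v : Fin p) : Finset (Fin p) := Finset.univ.filter fun w => (w, v) ∈ G.edges

@[simp]
theorem mem_parents {v w : Fin p} : w ∈ G.parents v ↔ (w, v) ∈ G.edges := by
  simp [parents]

theorem dSep_parents (hij : i ≠ j) (hadj : ¬ G.adj i j) (hij' : ¬ TransGen G.edgeRel i j) :
    G.dSep i j (G.parents i) := by
  refine ⟨hij, fun hcon => ?_⟩
  obtain ⟨l, -, h⟩ := dConnected_iff_exists_activeWalk.1 hcon
  have hlen := h.two_le_length
  obtain ⟨b, hb⟩ := List.exists_getElem?_eq_some (l := l) (n := 1) (by omega)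
  rcases h.adj h.head hb with hib | hbi
  · rcases h.ancestorOfSet_or_transGen h.head hb hib h.last (by omega) with ⟨s, hs, his⟩ | hpath
    · exact G.not_transGen_self i (.tail' his (mem_parents.1 hs))
    · exact hij' hpath
  · by_cases hlen2 : l.length = 2
    · have hlast := h.last
      rw [hlen2, hb] at hlast; cases hlast
      exact hadj (.inr hbi)
    · obtain ⟨c, hc⟩ := List.exists_getElem?_eq_some (l := l) (n := 2) (by omega)
      exact (h.activeTriple h.head hb hc).2 (not_isCollider_of_mem_edges_left hbi)
        (mem_parents.2 hbi)

theorem exists_dSep_of_not_adj {a b : Fin p} (hab : a ≠ b) (hadj : ¬ G.adj a b) :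
    ∃ S, G.dSep a b S ∧ a ∉ S ∧ b ∉ S := by
  by_cases hpath : TransGen G.edgeRel a b
  · have hba : ¬ TransGen G.edgeRel b a := fun h => G.not_transGen_self a (hpath.trans h)
    exact ⟨G.parents b, (dSep_parents hab.symm (mt adj_comm.1 hadj) hba).symm,
      fun h => hadj (.inl (mem_parents.1 h)), fun h => not_mem_edges_self b (mem_parents.1 h)⟩
  · exact ⟨G.parents a, dSep_parents hab hadj hpath,
      fun h => not_mem_edges_self a (mem_parents.1 h), fun h => hadj (.inr (mem_parents.1 h))⟩

theorem isCollider_iff_of_not_activeTriple {a b c : Fin p} (h : ¬ G.ActiveTriple S a b c)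
    (h' : ¬ G'.ActiveTriple S a b c) : G.isCollider a b c ↔ G'.isCollider a b c := by
  simp only [ActiveTriple, not_and_or, Classical.not_imp] at h h'
  by_cases hb : b ∈ S
  · have := ancestorOfSet_of_mem (G := G) hb
    have := ancestorOfSet_of_mem (G := G') hb
    tauto
  · tauto

structure SameSkeletonAndVStructures (G G' : DAG p) : Prop where
  adj_iff : ∀ a b, G.adj a b ↔ G'.adj a b
  isCollider_iff : ∀ a b c, a ≠ c → ¬ G.adj a c → G.adj a b → G.adj b c →
    (G.isCollider a b c ↔ G'.isCollider a b c)

namespace SameSkeletonAndVStructures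

theorem symm (h : SameSkeletonAndVStructures G G') : SameSkeletonAndVStructures G' G where
  adj_iff a b := (h.adj_iff a b).symm
  isCollider_iff a b c hac hn hab hbc :=
    (h.isCollider_iff a b c hac (fun h' => hn ((h.adj_iff a c).1 h'))
      ((h.adj_iff a b).2 hab) ((h.adj_iff b c).2 hbc)).symm

theorem mem_edges (h : SameSkeletonAndVStructures G G') {a b : Fin p}
    (hab : (a, b) ∈ G.edges) (hba : (b, a) ∉ G'.edges) : (a, b) ∈ G'.edges :=
  ((h.adj_iff a b).1 (.inl hab)).resolve_right hba

theorem adj_of_not_isCollider_iff (h : SameSkeletonAndVStructures G G') {a b c : Fin p}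
    (hac : a ≠ c) (hab : G.adj a b) (hbc : G.adj b c)
    (hne : ¬ (G.isCollider a b c ↔ G'.isCollider a b c)) : G.adj a c :=
  by_contra fun hn => hne (h.isCollider_iff a b c hac hn hab hbc)

/-- Along a shortest directed path into `S`, an edge reversed in `G'` would create a new
collider in `G'`, hence a shield in `G`, hence a shortcut of the path. -/
theorem ancestorOfSet_of_isFirstStep (h : SameSkeletonAndVStructures G G') :
    ∀ n {v d : Fin p}, G.distToSet S d = n → G.IsFirstStep S v d → (v, d) ∈ G'.edges →
      G'.ancestorOfSet d S := by
  intro n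
  induction n with
  | zero =>
    intro v d hd ⟨_, hdAn, _⟩ _
    have := reachesIn_distToSet hdAn
    rw [hd] at this
    exact ancestorOfSet_of_mem this
  | succ n ih =>
    intro v d hd ⟨hvd, hdAn, hdist⟩ hvd'
    have hdS : d ∉ S := fun hdS => by
      have := distToSet_le (G := G) (n := 0) hdS
      omega
    obtain ⟨e, hde, heAn, hedist⟩ := exists_isFirstStep hdAn hdS
    by_cases hde' : (d, e) ∈ G'.edges
    · exact (ih (by omega) ⟨hde, heAn, hedist⟩ hde').of_edge hde'
    exfalso
    have hve : v ≠ e := by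
      rintro rfl
      exact not_mem_edges_swap hvd hde
    have hed' : (e, d) ∈ G'.edges := ((h.adj_iff d e).1 (.inl hde)).resolve_left hde'
    have hadj := h.adj_of_not_isCollider_iff hve (.inl hvd) (.inl hde)
      fun hiff => not_mem_edges_swap hde (hiff.2 ⟨hvd', hed'⟩).2
    have := distToSet_le_succ (mem_edges_of_adj_of_path hvd hde hadj) heAn
    omega

theorem ancestorOfSet (h : SameSkeletonAndVStructures G G') {b : Fin p}
    (hb : G.ancestorOfSet b S) (hfirst : ∀ d, G.IsFirstStep S b d → (b, d) ∈ G'.edges) :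
    G'.ancestorOfSet b S := by
  by_cases hbS : b ∈ S
  · exact ancestorOfSet_of_mem hbS
  obtain ⟨d, hd⟩ := exists_isFirstStep hb hbS
  exact (h.ancestorOfSet_of_isFirstStep _ rfl hd (hfirst d hd)).of_edge (hfirst d hd)

end SameSkeletonAndVStructures

variable (G S) in
noncomputable def totalDistToSet (l : List (Fin p)) : ℕ := (l.map (G.distToSet S)).sum

theorem totalDistToSet_set_lt {k : ℕ} {b d : Fin p} (hb : l[k]? = some b)
    (hlt : G.distToSet S d < G.distToSet S b) :
    G.totalDistToSet S (l.set k d) < G.totalDistToSet S l := by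
  obtain ⟨hk, rfl⟩ := List.getElem?_eq_some_iff.1 hb
  have hk' : k < (l.map (G.distToSet S)).length := by simpa using hk
  unfold totalDistToSet
  conv_rhs => rw [← List.set_getElem_self hk']
  rw [List.map_set, List.sum_set, List.sum_set, if_pos hk', if_pos hk']
  simp only [List.getElem_map]
  omega

namespace ActiveWalk

/-- The v-structure `a → b ← c` and the edge `d → b` of `G'` force `a → d ← c` in `G`, so `d`
can replace `b`. -/
theorem exists_lt_totalDistToSet (h : G.ActiveWalk S i j l)
    (hGG' : SameSkeletonAndVStructures G G') {n : ℕ} {a b c d : Fin p} (ha : l[n]? = some a)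
    (hb : l[n + 1]? = some b) (hc : l[n + 2]? = some c) (hcol : G.isCollider a b c)
    (hac : a ≠ c) (hnac : ¬ G.adj a c) (hd : G.IsFirstStep S b d)
    (hdb' : (d, b) ∈ G'.edges) :
    ∃ l', G.ActiveWalk S i j l' ∧ l'.length = l.length ∧
      G.totalDistToSet S l' < G.totalDistToSet S l := by
  obtain ⟨hbd, hdAn, hdist⟩ := hd
  have hcol' : G'.isCollider a b c :=
    (hGG'.isCollider_iff a b c hac hnac (.inl hcol.1) (.inr hcol.2)).1 hcol
  have toward_d : ∀ x, (x, b) ∈ G.edges → (x, b) ∈ G'.edges → (x, d) ∈ G.edges := by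
    intro x hxb hxb'
    have hxd : x ≠ d := by
      rintro rfl
      exact not_mem_edges_swap hxb hbd
    refine mem_edges_of_adj_of_path hxb hbd
      (hGG'.adj_of_not_isCollider_iff hxd (.inl hxb) (.inl hbd) fun hiff => ?_)
    exact not_isCollider_of_mem_edges_right hbd (hiff.2 ⟨hxb', hdb'⟩)
  have had := toward_d a hcol.1 hcol'.1
  have hcd := toward_d c hcol.2 hcol'.2
  refine ⟨_, h.set ha hc (.inl had) (.inr hcd) ?_ ⟨fun _ => hdAn, fun hn => (hn ⟨had, hcd⟩).elim⟩
    ?_, List.length_set, totalDistToSet_set_lt hb (by omega)⟩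
  · rintro k x rfl hx
    exact activeTriple_of_not_isCollider (not_isCollider_of_mem_edges_right had)
      ((h.activeTriple hx ha hb).2 (not_isCollider_of_mem_edges_right hcol.1))
  · intro y hy
    exact activeTriple_of_not_isCollider (not_isCollider_of_mem_edges_left hcd)
      ((h.activeTriple hb hc hy).2 (not_isCollider_of_mem_edges_left hcol.2))

/-- Cutting out `b` can only block `a` when `a ∈ S` is a collider `x → a ← b`; then the
v-structures force a shield `x - b`, and `a` is cut out instead. -/
theorem exists_shorter_of_new_collider_of_mem_edges (h : G.ActiveWalk S i j l)
    (hGG' : SameSkeletonAndVStructures G G') (hnd : l.Nodup) {n : ℕ} {a b c : Fin p}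
    (ha : l[n]? = some a) (hb : l[n + 1]? = some b) (hc : l[n + 2]? = some c)
    (hcol' : G'.isCollider a b c) (hbc : (b, c) ∈ G.edges) (hac : (a, c) ∈ G.edges) :
    ∃ l', G.ActiveWalk S i j l' ∧ l'.length < l.length := by
  have hbS := (h.activeTriple ha hb hc).2 (not_isCollider_of_mem_edges_right hbc)
  have hlen := of_getElem?_eq_some hc
  by_cases hdel : a ∈ S ∧ ∃ k x, k + 1 = n ∧ l[k]? = some x ∧ (x, a) ∈ G.edges
  · obtain ⟨haS, k, x, rfl, hx, hxa⟩ := hdel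
    have hba : (b, a) ∈ G.edges := (h.adj ha hb).resolve_left fun hab =>
      (h.activeTriple hx ha hb).2 (not_isCollider_of_mem_edges_right hab) haS
    have hxb : G.adj x b := by
      by_contra hn
      have := (hGG'.isCollider_iff x a b (hnd.ne_of_getElem? hx hb (by omega)) hn (.inl hxa)
        (.inr hba)).1 ⟨hxa, hba⟩
      exact not_mem_edges_swap hcol'.1 this.2
    refine ⟨_, h.eraseIdx hx hb hxb ?_ ?_, by rw [List.length_eraseIdx_of_lt (by omega)]; omega⟩
    · rintro k' w rfl hw
      exact ⟨fun _ => (ancestorOfSet_of_mem haS).of_edge hxa,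
        fun _ => (h.activeTriple hw hx ha).2 (not_isCollider_of_mem_edges_right hxa)⟩
    · intro y hy
      obtain rfl : c = y := Option.some_injective _ (hc.symm.trans hy)
      exact activeTriple_of_not_isCollider (not_isCollider_of_mem_edges_right hbc) hbS
  · refine ⟨_, h.eraseIdx ha hc (.inl hac) ?_ ?_,
      by rw [List.length_eraseIdx_of_lt (by omega)]; omega⟩
    · rintro k x rfl hx
      refine activeTriple_of_not_isCollider (not_isCollider_of_mem_edges_right hac) fun haS => ?_
      by_cases hxa : (x, a) ∈ G.edges
      · exact hdel ⟨haS, k, x, rfl, hx, hxa⟩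
      · exact (h.activeTriple hx ha hb).2 (fun hcol => hxa hcol.1) haS
    · intro y hy
      have old := h.activeTriple hb hc hy
      exact ⟨fun hcol => old.1 ⟨hbc, hcol.2⟩, fun hncol => old.2 fun hcol => hncol ⟨hac, hcol.2⟩⟩

theorem exists_shorter_of_new_collider (h : G.ActiveWalk S i j l)
    (hGG' : SameSkeletonAndVStructures G G') (hnd : l.Nodup) {n : ℕ} {a b c : Fin p}
    (ha : l[n]? = some a) (hb : l[n + 1]? = some b) (hc : l[n + 2]? = some c)
    (hncol : ¬ G.isCollider a b c) (hcol' : G'.isCollider a b c) :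
    ∃ l', G.ActiveWalk S i j l' ∧ l'.length < l.length := by
  have hac : G.adj a c := hGG'.adj_of_not_isCollider_iff (hnd.ne_of_getElem? ha hc (by omega))
    (h.adj ha hb) (h.adj hb hc) fun hiff => hncol (hiff.2 hcol')
  have horient :
      ((b, c) ∈ G.edges ∧ (a, c) ∈ G.edges) ∨ ((b, a) ∈ G.edges ∧ (c, a) ∈ G.edges) := by
    by_cases hbc : (b, c) ∈ G.edges
    · refine hac.imp (⟨hbc, ·⟩) fun hca => ⟨(h.adj ha hb).resolve_left fun hab => ?_, hca⟩
      exact not_mem_edges_of_path hab hbc hca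
    · have hcb := (h.adj hb hc).resolve_left hbc
      have hba := (h.adj ha hb).resolve_left fun hab => hncol ⟨hab, hcb⟩
      exact .inr ⟨hba, mem_edges_of_adj_of_path hcb hba (adj_comm.1 hac)⟩
  rcases horient with ⟨hbc, hac⟩ | ⟨hba, hca⟩
  · exact h.exists_shorter_of_new_collider_of_mem_edges hGG' hnd ha hb hc hcol' hbc hac
  · have hlen := of_getElem?_eq_some hc
    have hrev : ∀ {m k : ℕ} {x : Fin p}, l[k]? = some x → m + k + 1 = l.length →
        l.reverse[m]? = some x := fun hx hmk => (List.getElem?_reverse' hmk).trans hx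
    obtain ⟨l', h', hlt⟩ := h.reverse.exists_shorter_of_new_collider_of_mem_edges hGG'
      (List.nodup_reverse.2 hnd) (n := l.length - 3 - n) (hrev hc (by omega))
      (hrev hb (by omega)) (hrev ha (by omega)) (isCollider_comm.1 hcol') hba hca
    exact ⟨l'.reverse, h'.reverse, by simpa using hlt⟩

theorem transfer (h : G.ActiveWalk S i j l)
    (hGG' : SameSkeletonAndVStructures G G') (hnd : l.Nodup)
    (hshield : ∀ n a b c, l[n]? = some a → l[n + 1]? = some b → l[n + 2]? = some c →
      G.isCollider a b c → ¬ G.adj a c)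
    (hfirst : ∀ n a b c d, l[n]? = some a → l[n + 1]? = some b → l[n + 2]? = some c →
      G.isCollider a b c → G.IsFirstStep S b d → (d, b) ∉ G'.edges)
    (hnew : ∀ n a b c, l[n]? = some a → l[n + 1]? = some b → l[n + 2]? = some c →
      ¬ G.isCollider a b c → ¬ G'.isCollider a b c) :
    G'.ActiveWalk S i j l where
  adj ha hb := (hGG'.adj_iff _ _).1 (h.adj ha hb)
  two_le_length := h.two_le_length
  head := h.head
  last := h.last
  activeTriple {n a b c} ha hb hc := by
    have hG := h.activeTriple ha hb hc
    constructor
    · intro hcol'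
      have hcol : G.isCollider a b c := by_contra fun hncol => hnew n a b c ha hb hc hncol hcol'
      exact hGG'.ancestorOfSet (hG.1 hcol)
        fun d hd => hGG'.mem_edges hd.1 (hfirst n a b c d ha hb hc hcol hd)
    · intro hncol'
      refine hG.2 fun hcol => hncol' ((hGG'.isCollider_iff a b c ?_
        (hshield n a b c ha hb hc hcol) (h.adj ha hb) (h.adj hb hc)).1 hcol)
      exact hnd.ne_of_getElem? ha hc (by omega)

end ActiveWalk

namespace SameSkeletonAndVStructures

theorem dConnected_of_activeWalk (hGG' : SameSkeletonAndVStructures G G')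
    {l : List (Fin p)} (h : G.ActiveWalk S i j l) (hij : i ≠ j) : G'.dConnected i j S := by
  by_cases hnd : l.Nodup
  swap
  · obtain ⟨l', h', hlt⟩ := h.exists_shorter_of_not_nodup hij hnd
    exact hGG'.dConnected_of_activeWalk h' hij
  by_cases hshield : ∃ n a b c, l[n]? = some a ∧ l[n + 1]? = some b ∧ l[n + 2]? = some c ∧
      G.isCollider a b c ∧ G.adj a c
  · obtain ⟨n, a, b, c, ha, hb, hc, hcol, hac⟩ := hshield
    obtain ⟨l', h', hlt⟩ := h.exists_shorter_of_shielded_collider ha hb hc hcol hac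
    exact hGG'.dConnected_of_activeWalk h' hij
  by_cases hfirst : ∃ n a b c d, l[n]? = some a ∧ l[n + 1]? = some b ∧ l[n + 2]? = some c ∧
      G.isCollider a b c ∧ G.IsFirstStep S b d ∧ (d, b) ∈ G'.edges
  · obtain ⟨n, a, b, c, d, ha, hb, hc, hcol, hd, hdb'⟩ := hfirst
    obtain ⟨l', h', hlen, hlt⟩ := h.exists_lt_totalDistToSet hGG' ha hb hc hcol
      (hnd.ne_of_getElem? ha hc (by omega))
      (fun hac => hshield ⟨n, a, b, c, ha, hb, hc, hcol, hac⟩) hd hdb'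
    exact hGG'.dConnected_of_activeWalk h' hij
  by_cases hnew : ∃ n a b c, l[n]? = some a ∧ l[n + 1]? = some b ∧ l[n + 2]? = some c ∧
      ¬ G.isCollider a b c ∧ G'.isCollider a b c
  · obtain ⟨n, a, b, c, ha, hb, hc, hncol, hcol'⟩ := hnew
    obtain ⟨l', h', hlt⟩ := h.exists_shorter_of_new_collider hGG' hnd ha hb hc hncol hcol'
    exact hGG'.dConnected_of_activeWalk h' hij
  push Not at hshield hfirst hnew
  exact dConnected_iff_exists_activeWalk.2 ⟨l, hnd, h.transfer hGG' hnd hshield hfirst hnew⟩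
termination_by (l.length, G.totalDistToSet S l)
decreasing_by
  all_goals first
    | exact Prod.Lex.left _ _ hlt
    | exact hlen ▸ Prod.Lex.right _ hlt

theorem dConnected (hGG' : SameSkeletonAndVStructures G G')
    (h : G.dConnected i j S) : G'.dConnected i j S := by
  obtain ⟨l, hnd, hl⟩ := dConnected_iff_exists_activeWalk.1 h
  exact hGG'.dConnected_of_activeWalk hl
    (hnd.ne_of_getElem? hl.head hl.last (by have := hl.two_le_length; omega))

theorem markovEquiv (hGG' : SameSkeletonAndVStructures G G') :
    MarkovEquiv G G' :=
  fun _ _ _ => and_congr_right' (not_congr ⟨hGG'.dConnected, hGG'.symm.dConnected⟩)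

end SameSkeletonAndVStructures

end DAG

section Faithfulness

variable {CI : CIModel p} {G G' : DAG p}

theorem AdjFaithful.skeleton_subset (hAF : AdjFaithful G CI) (hM' : Markov G' CI) :
    G.skeleton ⊆ G'.skeleton := by
  intro e he
  induction e using Sym2.ind with | h a b => ?_
  rw [DAG.mem_skeleton_iff] at he ⊢
  by_contra hn
  obtain ⟨S, hsep, haS, hbS⟩ := DAG.exists_dSep_of_not_adj he.ne hn
  rcases he with he | he
  · exact (hAF _ he S haS hbS).1 (hM' _ _ _ hsep)
  · exact (hAF _ he S hbS haS).2 (hM' _ _ _ hsep)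

theorem OrientFaithful.isCollider_iff (hOF : OrientFaithful G CI) (hM' : Markov G' CI)
    (hadj : ∀ a b, G.adj a b ↔ G'.adj a b) {a b c : Fin p} (hac : a ≠ c) (hnac : ¬ G.adj a c)
    (hab : G.adj a b) (hbc : G.adj b c) : G.isCollider a b c ↔ G'.isCollider a b c := by
  obtain ⟨S, hsep', -⟩ := DAG.exists_dSep_of_not_adj hac (mt (hadj a c).2 hnac)
  have hsep : G.dSep a c S :=
    ⟨hac, fun hcon => (hOF a b c hab hbc hnac hac S hcon).1 (hM' _ _ _ hsep')⟩
  exact DAG.isCollider_iff_of_not_activeTriple (DAG.not_activeTriple_of_dSep hsep hab hbc)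
    (DAG.not_activeTriple_of_dSep hsep' ((hadj a b).1 hab) ((hadj b c).1 hbc))

end Faithfulness

theorem restrictedFaithful_implies_SMR_general (CI : CIModel p) (G : DAG p)
    (hAF : AdjFaithful G CI) (hOF : OrientFaithful G CI) :
    ∀ G' : DAG p, Markov G' CI → ¬ MarkovEquiv G' G →
      G.edges.card < G'.edges.card := by
  intro G' hM' hne
  by_contra! hcard
  have hskel : G.skeleton = G'.skeleton :=
    Finset.eq_of_subset_of_card_le (hAF.skeleton_subset hM')
      (by rwa [DAG.card_skeleton, DAG.card_skeleton])
  have hadj : ∀ a b, G.adj a b ↔ G'.adj a b := fun a b => by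
    rw [← DAG.mem_skeleton_iff, ← DAG.mem_skeleton_iff, hskel]
  exact hne (DAG.SameSkeletonAndVStructures.mk hadj
    fun _ _ _ => hOF.isCollider_iff hM' hadj).symm.markovEquiv

/-- Restricted faithfulness (adjacency- plus orientation-faithfulness) together with
the Markov assumption implies the sparsest Markov representation assumption: any DAG
Markov w.r.t. the CI model that is not Markov equivalent to `G` has strictly more
edges than `G`. -/
theorem restrictedFaithful_implies_SMR (CI : CIModel p) (G : DAG p)
    (hMarkov : Markov G CI) (hAF : AdjFaithful G CI) (hOF : OrientFaithful G CI) :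
    ∀ G' : DAG p, Markov G' CI → ¬ MarkovEquiv G' G →
      G.edges.card < G'.edges.card :=
  restrictedFaithful_implies_SMR_general CI G hAF hOF
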